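/- arXiv:1406.3509 — 3 statements merged into one kernel-verified Lean document; each statement's English description precedes it below -/
import Mathlib

section
/- For every x ∈ B one has E·(x⊗1) = E·(1⊗S_B(x)), where the products are taken in the tensor product algebra B⊗C. -/
open scoped TensorProduct

/-- `ψ ⊗ id` followed by the identification `ℂ ⊗ N ≅ N`. -/
noncomputable def contrL {M N : Type*}
    [AddCommGroup M] [Module ℂ M] [AddCommGroup N] [Module ℂ N]
    (ψ : M →ₗ[ℂ] ℂ) : M ⊗[ℂ] N →ₗ[ℂ] N :=
  (TensorProduct.lid ℂ N).toLinearMap ∘ₗ TensorProduct.map ψ LinearMap.id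

/-!
Slicing `D = E·(x⊗1) - E·(1⊗xᵒᵖ)` in its first leg with `φ(·b)` gives
`(φ(·xb)⊗id)(E) - (φ(·b)⊗id)(E)·xᵒᵖ = (xb)ᵒᵖ - bᵒᵖxᵒᵖ = 0`. By faithfulness the functionals `φ(·b)`
separate the points of `B`, hence their slice maps separate the points of `B ⊗ C`, and `D = 0`.
-/

section Slice

variable {M N : Type*} [AddCommGroup M] [Module ℂ M] [AddCommGroup N] [Module ℂ N]

@[simp]
lemma contrL_tmul (ψ : M →ₗ[ℂ] ℂ) (m : M) (n : N) : contrL ψ (m ⊗ₜ[ℂ] n) = ψ m • n := by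
  simp [contrL]

lemma Module.Basis.coord_contrL {κ : Type*} [DecidableEq κ] (𝒞 : Module.Basis κ ℂ N)
    (ψ : M →ₗ[ℂ] ℂ) (D : M ⊗[ℂ] N) (k : κ) :
    𝒞.coord k (contrL ψ D) = ψ (TensorProduct.equivFinsuppOfBasisRight 𝒞 D k) := by
  induction D using TensorProduct.induction_on with
  | zero => simp
  | tmul m n => simp [mul_comm]
  | add D₁ D₂ h₁ h₂ => simp only [map_add, Finsupp.add_apply, h₁, h₂]

lemma eq_zero_of_forall_contrL_eq_zero {ι : Type*} (Ψ : ι → M →ₗ[ℂ] ℂ)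
    (hΨ : ∀ m, (∀ i, Ψ i m = 0) → m = 0) (D : M ⊗[ℂ] N) (hD : ∀ i, contrL (Ψ i) D = 0) :
    D = 0 := by
  classical
  let 𝒞 := Module.Basis.ofVectorSpace ℂ N
  suffices TensorProduct.equivFinsuppOfBasisRight 𝒞 D = 0 by simpa using this
  ext k
  refine hΨ _ fun i => ?_
  rw [← 𝒞.coord_contrL, hD, map_zero]

end Slice

section Algebra

variable {B C : Type*} [Ring B] [Algebra ℂ B] [Ring C] [Algebra ℂ C]

lemma contrL_mul_tmul_one (ψ : B →ₗ[ℂ] ℂ) (T : B ⊗[ℂ] C) (x : B) :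
    contrL ψ (T * (x ⊗ₜ[ℂ] (1 : C))) = contrL (ψ ∘ₗ LinearMap.mulRight ℂ x) T := by
  induction T using TensorProduct.induction_on with
  | zero => simp
  | tmul m n => simp
  | add T₁ T₂ h₁ h₂ => simp [add_mul, h₁, h₂]

lemma contrL_mul_one_tmul (ψ : B →ₗ[ℂ] ℂ) (T : B ⊗[ℂ] C) (c : C) :
    contrL ψ (T * ((1 : B) ⊗ₜ[ℂ] c)) = contrL ψ T * c := by
  induction T using TensorProduct.induction_on with
  | zero => simp
  | tmul m n => simp
  | add T₁ T₂ h₁ h₂ => simp [add_mul, h₁, h₂]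

end Algebra

theorem stmt6_general {B : Type*} [Ring B] [Algebra ℂ B]
    (φ : B →ₗ[ℂ] ℂ)
    (hf1 : ∀ x : B, (∀ b : B, φ (x * b) = 0) → x = 0)
    (E : B ⊗[ℂ] Bᵐᵒᵖ)
    (hsep : ∀ x : B,
      contrL (φ ∘ₗ LinearMap.mulRight ℂ x) E = MulOpposite.op x) :
    ∀ x : B,
      E * (x ⊗ₜ[ℂ] (1 : Bᵐᵒᵖ)) = E * ((1 : B) ⊗ₜ[ℂ] MulOpposite.op x) := by
  intro x
  refine sub_eq_zero.mp <| eq_zero_of_forall_contrL_eq_zero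
    (fun b => φ ∘ₗ LinearMap.mulRight ℂ b) hf1 _ fun b => ?_
  rw [map_sub, contrL_mul_tmul_one, contrL_mul_one_tmul, LinearMap.comp_assoc,
    ← LinearMap.mulRight_mul, hsep, hsep, MulOpposite.op_mul, sub_self]

/-- With `C = Bᵐᵒᵖ`, `S_B(x) = xᵒᵖ`, `φ` a faithful functional with modular automorphism `σ`
and `E ∈ B⊗C` an idempotent with `(φ(·x)⊗id)(E) = S_B(x)` for all `x`, one has
`E·(x⊗1) = E·(1⊗S_B(x))` for all `x ∈ B`. -/
theorem stmt6 {B : Type*} [Ring B] [Algebra ℂ B]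
    (φ : B →ₗ[ℂ] ℂ)
    (hf1 : ∀ x : B, (∀ b : B, φ (x * b) = 0) → x = 0)
    (hf2 : ∀ x : B, (∀ b : B, φ (b * x) = 0) → x = 0)
    (σ : B ≃ₐ[ℂ] B)
    (hmod : ∀ x₁ x₂ : B, φ (x₁ * x₂) = φ (x₂ * σ x₁))
    (E : B ⊗[ℂ] Bᵐᵒᵖ)
    (hEidem : E * E = E)
    (hsep : ∀ x : B,
      contrL (φ ∘ₗ LinearMap.mulRight ℂ x) E = MulOpposite.op x) :
    ∀ x : B,
      E * (x ⊗ₜ[ℂ] (1 : Bᵐᵒᵖ)) = E * ((1 : B) ⊗ₜ[ℂ] MulOpposite.op x) :=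
  stmt6_general φ hf1 E hsep
end

section
/- The functional φ_C is faithful and has modular automorphism σ_C := S_B∘S_C (i.e., φ_C(y₁y₂) = φ_C(y₂σ_C(y₁)) for all y₁, y₂ ∈ C); moreover (id⊗φ_C(y·))(E) = S_C(y) for all y ∈ C, where φ_C(y·) denotes the functional z ↦ φ_C(yz), and one has the normalizations (φ⊗id)(E) = 1 and (id⊗φ_C)(E) = 1. -/
open scoped TensorProduct

/-- `id ⊗ χ` followed by the identification `M ⊗ ℂ ≅ M`. -/
noncomputable def contrR {M N : Type*}
    [AddCommGroup M] [Module ℂ M] [AddCommGroup N] [Module ℂ N]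
    (χ : N →ₗ[ℂ] ℂ) : M ⊗[ℂ] N →ₗ[ℂ] M :=
  (TensorProduct.rid ℂ M).toLinearMap ∘ₗ TensorProduct.map LinearMap.id χ

/-- `φ_C := φ ∘ S_B⁻¹ : Bᵐᵒᵖ → ℂ`, i.e. `φ_C(y) = φ(unop y)`. -/
noncomputable def phiC {B : Type*} [Ring B] [Algebra ℂ B] (φ : B →ₗ[ℂ] ℂ) :
    Bᵐᵒᵖ →ₗ[ℂ] ℂ :=
  φ ∘ₗ (MulOpposite.opLinearEquiv ℂ : B ≃ₗ[ℂ] Bᵐᵒᵖ).symm.toLinearMap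

/-- `φ_C` is faithful with modular automorphism `σ_C = S_B∘S_C`, satisfies
`(id⊗φ_C(y·))(E) = S_C(y)` for all `y ∈ C`, and one has the normalizations
`(φ⊗id)(E) = 1` and `(id⊗φ_C)(E) = 1`. -/
theorem stmt8 {B : Type*} [Ring B] [Algebra ℂ B]
    (φ : B →ₗ[ℂ] ℂ)
    (hf1 : ∀ x : B, (∀ b : B, φ (x * b) = 0) → x = 0)
    (hf2 : ∀ x : B, (∀ b : B, φ (b * x) = 0) → x = 0)
    (σ : B ≃ₐ[ℂ] B)
    (hmod : ∀ x₁ x₂ : B, φ (x₁ * x₂) = φ (x₂ * σ x₁))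
    (E : B ⊗[ℂ] Bᵐᵒᵖ)
    (hEidem : E * E = E)
    (hsep : ∀ x : B,
      contrL (φ ∘ₗ LinearMap.mulRight ℂ x) E = MulOpposite.op x) :
    (∀ y : Bᵐᵒᵖ, (∀ z : Bᵐᵒᵖ, phiC φ (y * z) = 0) → y = 0) ∧
    (∀ y : Bᵐᵒᵖ, (∀ z : Bᵐᵒᵖ, phiC φ (z * y) = 0) → y = 0) ∧
    (∀ y₁ y₂ : Bᵐᵒᵖ,
      phiC φ (y₁ * y₂) = phiC φ (y₂ * MulOpposite.op (σ.symm y₁.unop))) ∧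
    (∀ y : Bᵐᵒᵖ,
      contrR (phiC φ ∘ₗ LinearMap.mulLeft ℂ y) E = σ.symm y.unop) ∧
    contrL φ E = 1 ∧
    contrR (phiC φ) E = 1 := by
  have hphiC : ∀ y : Bᵐᵒᵖ, phiC φ y = φ y.unop := fun y => rfl
  have key : ∀ y : Bᵐᵒᵖ,
      contrR (phiC φ ∘ₗ LinearMap.mulLeft ℂ y) E = σ.symm y.unop := by
    intro y
    set a := y.unop with ha
    have hy : y = MulOpposite.op a := rfl
    have main : ∀ b : B,
        φ (b * (contrR (phiC φ ∘ₗ LinearMap.mulLeft ℂ y) E - σ.symm a)) = 0 := by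
      intro b
      have hmaps :
          (φ ∘ₗ LinearMap.mulLeft ℂ b) ∘ₗ
            contrR (phiC φ ∘ₗ LinearMap.mulLeft ℂ y)
          = (phiC φ ∘ₗ LinearMap.mulLeft ℂ y) ∘ₗ
            contrL (φ ∘ₗ LinearMap.mulRight ℂ (σ b)) := by
        apply TensorProduct.ext'
        intro e c
        simp [contrR, contrL, phiC, hy, smul_eq_mul, mul_smul_comm, mul_comm]
        rw [hmod b e]
        ring
      have h1 := LinearMap.congr_fun hmaps E
      simp only [LinearMap.comp_apply, LinearMap.mulLeft_apply] at h1
      rw [hsep (σ b)] at h1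
      -- h1 : φ (b * contrR ... E) = phiC φ (y * op (σ b))
      rw [mul_sub, map_sub, h1]
      have h2 : phiC φ (y * MulOpposite.op (σ b)) = φ (σ b * a) := by
        simp [hphiC, hy]
      have h3 : φ (b * σ.symm a) = φ (σ b * a) := by
        rw [hmod b (σ.symm a), hmod (σ.symm a) (σ b)]
        simp
      rw [h2, h3, sub_self]
    have := hf2 _ main
    rw [sub_eq_zero] at this
    exact this
  refine ⟨?_, ?_, ?_, key, ?_, ?_⟩
  · intro y h
    have : ∀ b : B, φ (b * y.unop) = 0 := by
      intro b
      have := h (MulOpposite.op b)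
      simpa [hphiC] using this
    have := hf2 _ this
    exact MulOpposite.unop_injective this
  · intro y h
    have : ∀ b : B, φ (y.unop * b) = 0 := by
      intro b
      have := h (MulOpposite.op b)
      simpa [hphiC] using this
    have := hf1 _ this
    exact MulOpposite.unop_injective this
  · intro y₁ y₂
    simp only [hphiC, MulOpposite.unop_mul, MulOpposite.unop_op]
    rw [hmod (σ.symm y₁.unop) y₂.unop]
    simp
  · have := hsep 1
    simpa [LinearMap.mulRight_one] using this
  · have := key 1
    simpa [LinearMap.mulLeft_one] using this
end

section
/- The ℂ-linear functional ε : A → ℂ determined by ε(y⊗x) := φ_C(y·S_B(x)) is a counit for Δ: (ε⊗id)∘Δ = id_A = (id⊗ε)∘Δ. -/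
open scoped TensorProduct

set_option synthInstance.maxHeartbeats 1000000
set_option maxHeartbeats 1000000

/-- The coproduct `Δ : C⊗B → (C⊗B)⊗(C⊗B)` determined by
`Δ(y⊗x) = Σᵢ (y⊗E⁽¹⁾ᵢ)⊗(E⁽²⁾ᵢ⊗x)`, where `E = Σᵢ E⁽¹⁾ᵢ⊗E⁽²⁾ᵢ ∈ B⊗C`. -/
noncomputable def DeltaCB {B C : Type*} [Ring B] [Algebra ℂ B] [Ring C] [Algebra ℂ C]
    (E : B ⊗[ℂ] C) :
    (C ⊗[ℂ] B) →ₗ[ℂ] (C ⊗[ℂ] B) ⊗[ℂ] (C ⊗[ℂ] B) :=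
  (TensorProduct.assoc ℂ (C ⊗[ℂ] B) C B).toLinearMap ∘ₗ
    (TensorProduct.congr (TensorProduct.assoc ℂ C B C).symm
      (LinearEquiv.refl ℂ B)).toLinearMap ∘ₗ
    (TensorProduct.assoc ℂ C (B ⊗[ℂ] C) B).symm.toLinearMap ∘ₗ
    LinearMap.lTensor C (TensorProduct.mk ℂ (B ⊗[ℂ] C) B E)

/-- The functional `ε : C⊗B → ℂ`, `y⊗x ↦ φ_C(y·S_B(x))`, where `φ_C = φ_B∘S_B⁻¹`. -/
noncomputable def epsCB {B C : Type*} [Ring B] [Algebra ℂ B] [Ring C] [Algebra ℂ C]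
    (SB : B ≃ₗ[ℂ] C) (φB : B →ₗ[ℂ] ℂ) : (C ⊗[ℂ] B) →ₗ[ℂ] ℂ :=
  (φB ∘ₗ SB.symm.toLinearMap) ∘ₗ TensorProduct.lift (LinearMap.mul ℂ C) ∘ₗ
    LinearMap.lTensor C SB.toLinearMap

/-- The functional `ε(y⊗x) = φ_C(y·S_B(x))` is a counit for `Δ`:
`(ε⊗id)∘Δ = id = (id⊗ε)∘Δ`. -/
theorem stmt18 {B C : Type*} [Ring B] [Algebra ℂ B] [Ring C] [Algebra ℂ C]
    (SB : B ≃ₗ[ℂ] C) (hSBmul : ∀ x x' : B, SB (x * x') = SB x' * SB x)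
    (hSBone : SB 1 = 1)
    (SC : C ≃ₗ[ℂ] B) (hSCmul : ∀ y y' : C, SC (y * y') = SC y' * SC y)
    (hSCone : SC 1 = 1)
    (E : B ⊗[ℂ] C) (hEidem : E * E = E)
    (hE1 : ∀ x : B, E * (x ⊗ₜ[ℂ] (1 : C)) = E * ((1 : B) ⊗ₜ[ℂ] SB x))
    (hE2 : ∀ y : C, ((1 : B) ⊗ₜ[ℂ] y) * E = (SC y ⊗ₜ[ℂ] (1 : C)) * E)
    (φB : B →ₗ[ℂ] ℂ)
    (hf1 : ∀ x : B, (∀ b : B, φB (x * b) = 0) → x = 0)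
    (hf2 : ∀ x : B, (∀ b : B, φB (b * x) = 0) → x = 0)
    (hmod : ∀ x₁ x₂ : B, φB (x₁ * x₂) = φB (x₂ * SB.symm (SC.symm x₁)))
    (hsepB : ∀ x : B, contrL (φB ∘ₗ LinearMap.mulRight ℂ x) E = SB x)
    (hsepC : ∀ y : C,
      contrR ((φB ∘ₗ SB.symm.toLinearMap) ∘ₗ LinearMap.mulLeft ℂ y) E = SC y) :
    ((TensorProduct.lid ℂ (C ⊗[ℂ] B)).toLinearMap ∘ₗ
        LinearMap.rTensor (C ⊗[ℂ] B) (epsCB SB φB) ∘ₗ DeltaCB E = LinearMap.id) ∧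
    ((TensorProduct.rid ℂ (C ⊗[ℂ] B)).toLinearMap ∘ₗ
        LinearMap.lTensor (C ⊗[ℂ] B) (epsCB SB φB) ∘ₗ DeltaCB E = LinearMap.id) := by
  have hSBsymm : ∀ a b : C, SB.symm (a * b) = SB.symm b * SB.symm a := by
    intro a b
    apply SB.injective
    simp [hSBmul]
  have heps : ∀ (y : C) (x : B), epsCB SB φB (y ⊗ₜ[ℂ] x) = φB (SB.symm (y * SB x)) := by
    intro y x
    simp [epsCB]
  have hDzero : ∀ z : C ⊗[ℂ] B, DeltaCB (0 : B ⊗[ℂ] C) z = 0 := by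
    intro z
    simp [DeltaCB]
  have hDadd : ∀ (F₁ F₂ : B ⊗[ℂ] C) (z : C ⊗[ℂ] B),
      DeltaCB (F₁ + F₂) z = DeltaCB F₁ z + DeltaCB F₂ z := by
    intro F₁ F₂ z
    simp [DeltaCB, map_add, LinearMap.lTensor_add]
  have hDtmul : ∀ (b : B) (c : C) (y : C) (x : B),
      DeltaCB (b ⊗ₜ[ℂ] c) (y ⊗ₜ[ℂ] x) = (y ⊗ₜ[ℂ] b) ⊗ₜ[ℂ] (c ⊗ₜ[ℂ] x) := by
    intro b c y x
    simp [DeltaCB]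
  constructor
  · apply TensorProduct.ext'
    intro y x
    have h1 : ∀ F : B ⊗[ℂ] C,
        (TensorProduct.lid ℂ (C ⊗[ℂ] B)).toLinearMap
          (LinearMap.rTensor (C ⊗[ℂ] B) (epsCB SB φB) (DeltaCB F (y ⊗ₜ[ℂ] x))) =
        (contrL (φB ∘ₗ LinearMap.mulRight ℂ (SB.symm y)) F) ⊗ₜ[ℂ] x := by
      intro F
      induction F using TensorProduct.induction_on with
      | zero => simp [hDzero, contrL]
      | tmul b c =>
          rw [hDtmul]
          simp [contrL, heps, hSBsymm, TensorProduct.smul_tmul']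
      | add F₁ F₂ ih1 ih2 =>
          rw [hDadd, map_add, map_add, ih1, ih2, map_add, TensorProduct.add_tmul]
    simp only [LinearMap.comp_apply, LinearMap.id_apply]
    rw [h1, hsepB]
    simp
  · apply TensorProduct.ext'
    intro y x
    have hchi : ∀ c : C, φB (SB.symm (c * SB x)) = φB (SB.symm (SC.symm x * c)) := by
      intro c
      rw [hSBsymm, LinearEquiv.symm_apply_apply, hSBsymm, hmod x (SB.symm c)]
    have h2 : ∀ F : B ⊗[ℂ] C,
        (TensorProduct.rid ℂ (C ⊗[ℂ] B)).toLinearMap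
          (LinearMap.lTensor (C ⊗[ℂ] B) (epsCB SB φB) (DeltaCB F (y ⊗ₜ[ℂ] x))) =
        y ⊗ₜ[ℂ] (contrR ((φB ∘ₗ SB.symm.toLinearMap) ∘ₗ LinearMap.mulLeft ℂ (SC.symm x)) F) := by
      intro F
      induction F using TensorProduct.induction_on with
      | zero => simp [hDzero, contrR]
      | tmul b c =>
          rw [hDtmul]
          simp [contrR, heps, hchi, TensorProduct.smul_tmul', TensorProduct.tmul_smul]
      | add F₁ F₂ ih1 ih2 =>
          rw [hDadd, map_add, map_add, ih1, ih2, map_add, TensorProduct.tmul_add]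
    simp only [LinearMap.comp_apply, LinearMap.id_apply]
    rw [h2, hsepC]
    simp
end
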